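/- arXiv:1211.1747 — 2 statements merged into one kernel-verified Lean document; each statement's English description precedes it below -/
import Mathlib

section
/- The Cheng labeling is consistent with Kauffman's affine labeling: labeling each arc by the sum of signs of crossings first encountered as overcrossings when traveling around the diagram starting from that arc yields the same crossing weights W_±(c) as the affine labeling starting from an arbitrary arc labeled 0. -/
open scoped Classical
open LaurentPolynomial

noncomputable section

/-- A Gauss diagram for an oriented virtual knot with `n` classical crossings: a circle
with `2 * n` marked points (positions in `ZMod (2*n)`, traversed in cyclic order), and for
each crossing `c` a signed oriented chord, recorded by the position `over c` of its
over-passage (head), the position `under c` of its under-passage (tail), and its sign. -/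
structure GaussDiagram (n : ℕ) where
  over' : Fin n → ZMod (2 * n)
  under : Fin n → ZMod (2 * n)
  sign : Fin n → ℤ
  endpoints_inj : Function.Injective
    (fun p : Fin n × Bool => if p.2 then over' p.1 else under p.1)
  sign_pm : ∀ c, sign c = 1 ∨ sign c = -1

namespace GaussDiagram

/-- `x` lies strictly inside the arc running forward (in the orientation of the circle)
from `a` to `b`. -/
def Between {m : ℕ} (a b x : ZMod m) : Prop :=
  (x - a).val < (b - a).val ∧ x ≠ a

variable {n : ℕ}

/-- After orientedly smoothing the crossing `c`, the first component of the resulting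
2-component link `L_c` (the component carrying the dot placed on the incoming understrand
of `c`) is the arc running forward from the over-passage of `c` to its under-passage. -/
def onComp1 (G : GaussDiagram n) (c : Fin n) (x : ZMod (2 * n)) : Prop :=
  Between (G.over' c) (G.under c) x

/-- The chords `c` and `d` intersect (interleave): exactly one endpoint of `d` lies in the
arc cut out by `c`; equivalently `d` becomes a linking crossing of the smoothed link `L_c`. -/
def Crosses (G : GaussDiagram n) (c d : Fin n) : Prop :=
  Xor' (G.onComp1 c (G.over' d)) (G.onComp1 c (G.under d))

/-- `d ∈ P_c`: `d` intersects `c` positively (traveling along the first component of `L_c`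
one passes *over* `d`). -/
def PosAt (G : GaussDiagram n) (c d : Fin n) : Prop :=
  G.Crosses c d ∧ G.onComp1 c (G.over' d)

/-- `d ∈ N_c`: `d` intersects `c` negatively (traveling along the first component of `L_c`
one passes *under* `d`). -/
def NegAt (G : GaussDiagram n) (c d : Fin n) : Prop :=
  G.Crosses c d ∧ G.onComp1 c (G.under d)

/-- The wriggle number `W(L_c) = lk_O(L_c) - lk_U(L_c)` of the ordered 2-component link
obtained by the oriented smoothing at `c`. -/
def wriggle (G : GaussDiagram n) (c : Fin n) : ℤ :=
  (∑ d ∈ Finset.univ.filter (fun d => G.PosAt c d), G.sign d)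
    - ∑ d ∈ Finset.univ.filter (fun d => G.NegAt c d), G.sign d

/-- The writhe: the sum of the signs of all crossings. -/
def writhe (G : GaussDiagram n) : ℤ := ∑ c, G.sign c

/-- The Wriggle Polynomial `W_K(t) = Σ_c sign(c) · t^{W(L_c)} - writhe(K)`, as a Laurent
polynomial over `ℤ`. -/
def wrigglePoly (G : GaussDiagram n) : LaurentPolynomial ℤ :=
  (∑ c, C (G.sign c) * T (G.wriggle c)) - C G.writhe

end GaussDiagram

namespace GaussDiagram

variable {n : ℕ}

/-- The change of affine label when passing (in the direction of orientation) the marked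
point `p` of the circle: passing the over-passage (head) of a chord `d` changes the label
by `-sign d`, passing its under-passage (tail) changes it by `+sign d` (so `o+` gives `-1`,
`u+` gives `+1`, `o-` gives `+1`, `u-` gives `-1`). -/
def delta (G : GaussDiagram n) (p : ZMod (2 * n)) : ℤ :=
  (∑ d ∈ Finset.univ.filter (fun d => G.over' d = p), -G.sign d)
    + ∑ d ∈ Finset.univ.filter (fun d => G.under d = p), G.sign d

/-- Kauffman's affine labeling of the arcs of the diagram: the arc of the circle running
from the marked point `a` to `a + 1` receives the label obtained by starting with label `0`
on the arc `(base, base + 1)` and applying the label changes `delta` at each marked point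
passed while traveling forward from the base arc to the arc `(a, a+1)`. -/
def labelFrom (G : GaussDiagram n) (base a : ZMod (2 * n)) : ℤ :=
  ∑ j ∈ Finset.range ((a - base).val), G.delta (base + (j : ZMod (2 * n)) + 1)

/-- The weight `W_±(c)` of a crossing computed from an arc labeling `ℓ` (where `ℓ p` is the
label of the arc `(p, p+1)`): for a positive crossing with incoming over-arc label `a` and
incoming under-arc label `b` it is `a - (b + 1)`; for a negative crossing it is
`a - (b - 1)` (equivalently, the paper's `b' - (a' - 1)` in its labeling of the arcs at a
negative crossing). -/
def weightWith (G : GaussDiagram n) (ℓ : ZMod (2 * n) → ℤ) (c : Fin n) : ℤ :=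
  if G.sign c = 1 then ℓ (G.over' c - 1) - (ℓ (G.under c - 1) + 1)
  else ℓ (G.over' c - 1) - (ℓ (G.under c - 1) - 1)

/-- The affine index weight `W_±(c)` computed from the affine labeling based at `base`. -/
def affineWeight (G : GaussDiagram n) (base : ZMod (2 * n)) (c : Fin n) : ℤ :=
  G.weightWith (G.labelFrom base) c

/-- The Affine Index Polynomial `Σ_c sign(c) · t^{W_±(c)} - writhe(K)` computed from the
affine labeling based at `base`. -/
def affinePoly (G : GaussDiagram n) (base : ZMod (2 * n)) : LaurentPolynomial ℤ :=
  (∑ c, C (G.sign c) * T (G.affineWeight base c)) - C G.writhe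

end GaussDiagram

namespace GaussDiagram

/-- Cheng's labeling: the arc `(a, a+1)` is labeled by the sum of the signs of the
crossings whose over-passage (head of the chord) is encountered strictly before their
under-passage (tail) when traveling once around the circle starting on that arc. -/
def chengLabel {n : ℕ} (G : GaussDiagram n) (a : ZMod (2 * n)) : ℤ :=
  ∑ d ∈ Finset.univ.filter
      (fun d => (G.over' d - (a + 1)).val < (G.under d - (a + 1)).val),
    G.sign d

end GaussDiagram


/-!
Moving the starting arc of Cheng's labeling forward past one marked point changes only the
chord with an endpoint there: if that point is the head of `d`, then `d` is no longer met
head first, and if it is the tail, `d` now is. So Cheng's labeling changes across each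
marked point exactly by Kauffman's rule `delta`, hence differs from the affine labeling by
the constant `chengLabel base`, and crossing weights only see differences of labels.
-/

namespace ZMod

variable {m : ℕ} [NeZero m]

lemma val_sub_one_of_ne_zero {y : ZMod m} (hy : y ≠ 0) : (y - 1).val = y.val - 1 := by
  obtain ⟨k, rfl⟩ := Nat.exists_eq_succ_of_ne_zero (NeZero.ne m)
  exact (Fin.coe_sub_one y).trans (if_neg hy)

lemma val_neg_one_eq_sub_one : (-1 : ZMod m).val = m - 1 := by
  obtain ⟨k, rfl⟩ := Nat.exists_eq_succ_of_ne_zero (NeZero.ne m)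
  simp

/-- Traveling forward from `p + 1` one reaches `x` before `y` iff the same holds from `p`
and `x ≠ p`, or `y = p` (which is then reached last). -/
lemma val_sub_add_one_lt_val_sub_add_one_iff {p x y : ZMod m} (hxy : x ≠ y) :
    (x - (p + 1)).val < (y - (p + 1)).val ↔ (x - p).val < (y - p).val ∧ x ≠ p ∨ y = p := by
  have shift : ∀ z, z ≠ p → (z - (p + 1)).val = (z - p).val - 1 := fun z hz => by
    rw [sub_add_eq_sub_sub]
    exact val_sub_one_of_ne_zero (sub_ne_zero.mpr hz)
  have pos : ∀ z, z ≠ p → 0 < (z - p).val := fun z hz => val_pos.mpr (sub_ne_zero.mpr hz)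
  by_cases hx : x = p
  · subst hx
    rw [show x - (x + 1) = -1 by ring, val_neg_one_eq_sub_one, shift y hxy.symm]
    have := (y - x).val_lt
    simp only [ne_eq, not_true_eq_false, and_false, false_or, hxy.symm, iff_false]
    omega
  · by_cases hy : y = p
    · subst hy
      rw [show y - (y + 1) = -1 by ring, val_neg_one_eq_sub_one, shift x hx]
      have := (x - y).val_lt
      have := pos x hx
      simp only [or_true, iff_true]
      omega
    · rw [shift x hx, shift y hy]
      have := pos x hx
      have := pos y hy
      simp only [ne_eq, hx, not_false_eq_true, and_true, hy, or_false]
      omega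

end ZMod

namespace GaussDiagram

variable {n : ℕ}

lemma over_ne_under (G : GaussDiagram n) (d : Fin n) : G.over' d ≠ G.under d := fun h => by
  simpa using G.endpoints_inj (a₁ := (d, true)) (a₂ := (d, false)) (by simpa using h)

lemma weightWith_const_add (G : GaussDiagram n) (k : ℤ) (ℓ : ZMod (2 * n) → ℤ) (c : Fin n) :
    G.weightWith (fun a => k + ℓ a) c = G.weightWith ℓ c := by
  unfold weightWith
  split_ifs <;> ring

variable [NeZero n]

lemma chengLabel_add_one (G : GaussDiagram n) (b : ZMod (2 * n)) :
    G.chengLabel (b + 1) = G.chengLabel b + G.delta (b + 1) := by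
  simp only [chengLabel, delta, Finset.sum_filter, ← Finset.sum_add_distrib]
  refine Finset.sum_congr rfl fun d _ => ?_
  simp only [ZMod.val_sub_add_one_lt_val_sub_add_one_iff (p := b + 1) (G.over_ne_under d)]
  by_cases ho : G.over' d = b + 1 <;> by_cases hu : G.under d = b + 1
  · exact absurd (ho.trans hu.symm) (G.over_ne_under d)
  all_goals simp [ho, hu, sub_eq_zero]

lemma chengLabel_add_natCast (G : GaussDiagram n) (base : ZMod (2 * n)) (k : ℕ) :
    G.chengLabel (base + k) =
      G.chengLabel base + ∑ j ∈ Finset.range k, G.delta (base + j + 1) := by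
  induction k with
  | zero => simp
  | succ k ih =>
    rw [Nat.cast_succ, ← add_assoc, G.chengLabel_add_one, ih, Finset.sum_range_succ, add_assoc]

lemma chengLabel_eq_add_labelFrom (G : GaussDiagram n) (base a : ZMod (2 * n)) :
    G.chengLabel a = G.chengLabel base + G.labelFrom base a := by
  simpa [labelFrom] using G.chengLabel_add_natCast base (a - base).val

end GaussDiagram

open GaussDiagram

/-- The Cheng labeling is consistent with Kauffman's affine labeling:
labeling each arc by the sum of signs of crossings first encountered as overcrossings when
traveling around the diagram starting from that arc yields the same crossing weights
`W_±(c)` as the affine labeling starting from an arbitrary arc labeled `0`. -/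
theorem chengWeight_eq_affineWeight {n : ℕ} (G : GaussDiagram n) (base : ZMod (2 * n))
    (c : Fin n) :
    G.weightWith G.chengLabel c = G.affineWeight base c := by
  have : NeZero n := NeZero.of_pos c.pos
  rw [affineWeight, ← G.weightWith_const_add (G.chengLabel base) (G.labelFrom base)]
  congr 1
  funext a
  exact G.chengLabel_eq_add_labelFrom base a
end
end

section
/- If K_+ and K_− are virtual knot diagrams differing by a crossing change at a single crossing c₁, then for every other crossing c_i the wriggle numbers agree: W(L_{c_i}) computed in K_+ equals W(L_{ĉ_i}) computed in K_−. -/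
/-!
The wriggle number of `c` is a sum of per-chord terms that depend only on the arc of `c` and on
the head, tail and sign of the chord. A crossing change at `c₁ ≠ c` does not move the arc of `c`,
and reversing chord `c₁` while negating its sign moves it between `P_c` and `N_c`, so its term
is unchanged.
-/

open scoped Classical
open LaurentPolynomial

noncomputable section

namespace GaussDiagram

variable {n : ℕ}

/-- `G'` is obtained from `G` by a crossing change at the crossing `c₁`: the over/under
data at `c₁` is exchanged (the chord is reversed) and its sign is switched, while all
other crossings are unchanged. -/
def IsCrossingChange (G G' : GaussDiagram n) (c₁ : Fin n) : Prop :=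
  G'.over' = Function.update G.over' c₁ (G.under c₁) ∧
  G'.under = Function.update G.under c₁ (G.over' c₁) ∧
  G'.sign = Function.update G.sign c₁ (-(G.sign c₁))

/-- A crossing is odd iff the two occurrences of the crossing in the Gauss code are
separated by an odd number of letters, i.e. the forward distance between the two endpoints
of its chord is even. -/
def OddCrossing (G : GaussDiagram n) (c : Fin n) : Prop :=
  Even ((G.under c - G.over' c).val)

end GaussDiagram

open GaussDiagram

namespace GaussDiagram

/-- The term of a chord with head `o`, tail `u` and sign `s` in `W(L_c)`, where `A` is the first
component of `L_c`. -/
def chordContribution {α : Type*} (A : α → Prop) (o u : α) (s : ℤ) : ℤ :=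
  (if A o ∧ ¬A u then s else 0) - (if A u ∧ ¬A o then s else 0)

theorem chordContribution_swap_neg {α : Type*} (A : α → Prop) (o u : α) (s : ℤ) :
    chordContribution A u o (-s) = chordContribution A o u s := by
  unfold chordContribution
  by_cases ho : A o <;> by_cases hu : A u <;> simp [ho, hu]

variable {n : ℕ}

theorem posAt_iff (G : GaussDiagram n) (c d : Fin n) :
    G.PosAt c d ↔ G.onComp1 c (G.over' d) ∧ ¬G.onComp1 c (G.under d) := by
  change Xor _ _ ∧ _ ↔ _
  rw [xor_def]
  tauto

theorem negAt_iff (G : GaussDiagram n) (c d : Fin n) :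
    G.NegAt c d ↔ G.onComp1 c (G.under d) ∧ ¬G.onComp1 c (G.over' d) := by
  change Xor _ _ ∧ _ ↔ _
  rw [xor_def]
  tauto

theorem wriggle_eq_sum_chordContribution (G : GaussDiagram n) (c : Fin n) :
    G.wriggle c = ∑ d, chordContribution (G.onComp1 c) (G.over' d) (G.under d) (G.sign d) := by
  rw [wriggle, Finset.sum_filter, Finset.sum_filter, ← Finset.sum_sub_distrib]
  simp only [chordContribution, posAt_iff, negAt_iff]

theorem IsCrossingChange.onComp1_eq {G G' : GaussDiagram n} {c₁ c : Fin n}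
    (h : IsCrossingChange G G' c₁) (hc : c ≠ c₁) : G'.onComp1 c = G.onComp1 c := by
  obtain ⟨ho, hu, -⟩ := h
  funext x
  simp only [onComp1, ho, hu, Function.update_of_ne hc]

end GaussDiagram

/-- If `K₊` and `K₋` are virtual knot diagrams differing by a crossing
change at a single crossing `c₁`, then for every other crossing `c` the wriggle numbers
agree: `W(L_c)` computed in `K₊` equals `W(L_ĉ)` computed in `K₋`. -/
theorem wriggle_crossingChange_other {n : ℕ} (G G' : GaussDiagram n) (c₁ : Fin n)
    (h : GaussDiagram.IsCrossingChange G G' c₁) :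
    ∀ c : Fin n, c ≠ c₁ → G.wriggle c = G'.wriggle c := by
  intro c hc
  rw [wriggle_eq_sum_chordContribution, wriggle_eq_sum_chordContribution, h.onComp1_eq hc]
  obtain ⟨ho, hu, hs⟩ := h
  refine Finset.sum_congr rfl fun d _ => ?_
  rcases eq_or_ne d c₁ with rfl | hd
  · simp only [ho, hu, hs, Function.update_self, chordContribution_swap_neg]
  · simp only [ho, hu, hs, Function.update_of_ne hd]
end
end
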